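/- Let n ∈ {3k+1, 3k+2} with n ≥ 11 and n not divisible by 3. Suppose 𝒜 is an intersecting family of k-subsets of V = {1,…,n} if n = 3k+1 (respectively, an intersecting family of (k+1)-subsets 𝓑 if n = 3k+2). Define g : 𝒫(V) → {W,L} by: for n = 3k+1, g(U) = L iff U ∈ 𝒜 or |U| ≥ k+1; for n = 3k+2, g(U) = W iff U ∈ 𝓑 or |U| ≤ k. Then for every partition V = V₁ ⊔ V₂ ⊔ V₃, the multiset {g(V₁), g(V₂), g(V₃)} is consistent, i.e., not {W,W,W} and not {L,L,L}. -/
import Mathlib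


/-- Election result symbols: Win, Tie, Loss. -/
inductive WTL | W | T | L
deriving DecidableEq

open WTL

variable {α : Type*} [DecidableEq α]

/-- let `n ∈ {3k+1, 3k+2}` with `n ≥ 11`, `|V| = n`, and let `𝒜` be an
intersecting family of `k`-subsets of `V` (if `n = 3k+1`), resp. of `(k+1)`-subsets
(if `n = 3k+2`). Define `g : 𝒫(V) → {W,L}` by: for `n = 3k+1`, `g(U) = L` iff
`U ∈ 𝒜` or `|U| ≥ k+1` (and `g(U) = W` otherwise); for `n = 3k+2`, `g(U) = W` iff
`U ∈ 𝒜` or `|U| ≤ k` (and `g(U) = L` otherwise). Then for every partition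
`V = V₁ ⊔ V₂ ⊔ V₃`, the multiset `{g(V₁),g(V₂),g(V₃)}` is consistent, i.e. it is
neither `{W,W,W}` nor `{L,L,L}`. -/
theorem stmt19 (k n : ℕ) (hn : 11 ≤ n) (V : Finset α) (hV : V.card = n)
    (𝒜 : Finset (Finset α))
    (hint : ∀ A₁ ∈ 𝒜, ∀ A₂ ∈ 𝒜, (A₁ ∩ A₂).Nonempty)
    (g : Finset α → WTL)
    (hcase :
      (n = 3 * k + 1 ∧ (∀ A ∈ 𝒜, A ⊆ V ∧ A.card = k) ∧
        (∀ U ⊆ V, (g U = L ↔ (U ∈ 𝒜 ∨ k + 1 ≤ U.card)) ∧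
                  (g U = W ↔ ¬(U ∈ 𝒜 ∨ k + 1 ≤ U.card)))) ∨
      (n = 3 * k + 2 ∧ (∀ A ∈ 𝒜, A ⊆ V ∧ A.card = k + 1) ∧
        (∀ U ⊆ V, (g U = W ↔ (U ∈ 𝒜 ∨ U.card ≤ k)) ∧
                  (g U = L ↔ ¬(U ∈ 𝒜 ∨ U.card ≤ k))))) :
    ∀ V₁ V₂ V₃ : Finset α, V₁ ⊆ V → V₂ ⊆ V → V₃ ⊆ V →
      Disjoint V₁ V₂ → Disjoint V₁ V₃ → Disjoint V₂ V₃ → V₁ ∪ V₂ ∪ V₃ = V →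
      ({g V₁, g V₂, g V₃} : Multiset WTL) ≠ {W, W, W} ∧
      ({g V₁, g V₂, g V₃} : Multiset WTL) ≠ {L, L, L} := by

  intro V₁ V₂ V₃ h1 h2 h3 d12 d13 d23 hunion
  have hsum : V₁.card + V₂.card + V₃.card = n := by
    rw [← hV, ← hunion, Finset.card_union_of_disjoint (Finset.disjoint_union_left.2 ⟨d13, d23⟩),
      Finset.card_union_of_disjoint d12]
  have not2 : ∀ {A B : Finset α}, A ∈ 𝒜 → B ∈ 𝒜 → Disjoint A B → False := by
    intro A B hA hB hd
    have := hint A hA B hB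
    rw [Finset.disjoint_iff_inter_eq_empty.mp hd] at this
    exact absurd this (by simp)
  have eqs : ∀ x : WTL, ({g V₁, g V₂, g V₃} : Multiset WTL) = {x, x, x} →
      g V₁ = x ∧ g V₂ = x ∧ g V₃ = x := by
    intro x h
    refine ⟨?_, ?_, ?_⟩
    · have : g V₁ ∈ ({x,x,x} : Multiset WTL) := h ▸ (by simp)
      simpa using this
    · have : g V₂ ∈ ({x,x,x} : Multiset WTL) := h ▸ (by simp)
      simpa using this
    · have : g V₃ ∈ ({x,x,x} : Multiset WTL) := h ▸ (by simp)
      simpa using this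
  constructor
  · intro h
    obtain ⟨e1, e2, e3⟩ := eqs W h
    rcases hcase with ⟨hn1, hA, hg⟩ | ⟨hn2, hA, hg⟩
    · have c1 := (hg V₁ h1).2.mp e1
      have c2 := (hg V₂ h2).2.mp e2
      have c3 := (hg V₃ h3).2.mp e3
      push_neg at c1 c2 c3
      omega
    · have c1 := (hg V₁ h1).1.mp e1
      have c2 := (hg V₂ h2).1.mp e2
      have c3 := (hg V₃ h3).1.mp e3
      rcases c1 with m1 | c1 <;> rcases c2 with m2 | c2 <;> rcases c3 with m3 | c3
      · exact not2 m1 m2 d12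
      · exact not2 m1 m2 d12
      · exact not2 m1 m3 d13
      · have := (hA V₁ m1).2; omega
      · exact not2 m2 m3 d23
      · have := (hA V₂ m2).2; omega
      · have := (hA V₃ m3).2; omega
      · omega
  · intro h
    obtain ⟨e1, e2, e3⟩ := eqs L h
    rcases hcase with ⟨hn1, hA, hg⟩ | ⟨hn2, hA, hg⟩
    · have c1 := (hg V₁ h1).1.mp e1
      have c2 := (hg V₂ h2).1.mp e2
      have c3 := (hg V₃ h3).1.mp e3
      rcases c1 with m1 | c1 <;> rcases c2 with m2 | c2 <;> rcases c3 with m3 | c3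
      · exact not2 m1 m2 d12
      · exact not2 m1 m2 d12
      · exact not2 m1 m3 d13
      · have := (hA V₁ m1).2; omega
      · exact not2 m2 m3 d23
      · have := (hA V₂ m2).2; omega
      · have := (hA V₃ m3).2; omega
      · omega
    · have c1 := (hg V₁ h1).2.mp e1
      have c2 := (hg V₂ h2).2.mp e2
      have c3 := (hg V₃ h3).2.mp e3
      push_neg at c1 c2 c3
      omega
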